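/- arXiv:1508.07696 — 2 statements merged into one kernel-verified Lean document; each statement's English description precedes it below -/
import Mathlib

section
/- Let Y be a càdlàg integrable adapted process on [0,T] with conditional variation CV(Y) < ∞, and let a < b be real numbers. Then E[N^{a,b}(Y)] ≤ (1/(b−a))(|a| + CV(Y) + E[sup_{t∈[0,T]}|Y_t|]), where N^{a,b}(Y) is the number of up-crossings of the interval [a,b] by the path of Y. -/
open MeasureTheory

/-- `upcrossProp Y T a b n ω` : the path `s ↦ Y s ω` performs at least `n` upcrossings of the
interval `[a,b]` on `[0,T]`. -/
def upcrossProp {Ω : Type*} (Y : ℝ → Ω → ℝ) (T a b : ℝ) (n : ℕ) (ω : Ω) : Prop :=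
  ∃ u v : Fin n → ℝ,
    (∀ i, u i ∈ Set.Icc 0 T ∧ v i ∈ Set.Icc 0 T ∧ u i < v i ∧
      Y (u i) ω < a ∧ b < Y (v i) ω) ∧
    ∀ i j : Fin n, i < j → v i < u j

/-!
Sample `Y` on the dyadic grids `T j / 2 ^ k`. For a discrete process `f` with filtration `𝒢`,
Doob's pathwise inequality `(b - a) U_N ≤ ∑ H_j (f_{j+1} - f_j) + (a - f_N)⁺`, where the upcrossing
strategy `0 ≤ H_j ≤ 1` is `𝒢 j`-measurable, gives after conditioning each increment on `𝒢 j`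
`(b - a) E[U_N] ≤ ∑ E|E[f_{j+1} - f_j | 𝒢 j]| + E[(a - f_N)⁺] ≤ cv + |a| + E[sup |Y|]`.
By right-continuity, every upcrossing of the path is seen by all fine enough grids, and Fatou's
lemma carries the bound over to the continuous-time count.
-/

open Filter Topology
open scoped ENNReal

section Crossings

variable {Ω : Type*} {a b : ℝ} {f g : ℕ → Ω → ℝ} {N : ℕ} {ω : Ω}

theorem hittingBtwn_apply_congr {s t : Set ℝ} (h : ∀ j, f j ω ∈ s ↔ g j ω ∈ t) (n m : ℕ) :
    hittingBtwn f s n m ω = hittingBtwn g t n m ω := by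
  simp only [hittingBtwn]
  congr 1 <;> simp only [h]

theorem crossingTime_apply_congr (hlow : ∀ j, f j ω ≤ a ↔ g j ω ≤ a)
    (hup : ∀ j, b ≤ f j ω ↔ b ≤ g j ω) (n : ℕ) :
    upperCrossingTime a b f N n ω = upperCrossingTime a b g N n ω ∧
      lowerCrossingTime a b f N n ω = lowerCrossingTime a b g N n ω := by
  have hlow' := hittingBtwn_apply_congr (s := Set.Iic a) (t := Set.Iic a) hlow
  have hup' := hittingBtwn_apply_congr (s := Set.Ici b) (t := Set.Ici b) hup
  induction n with
  | zero => exact ⟨rfl, hlow' _ _⟩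
  | succ n ih =>
    have hupper : upperCrossingTime a b f N (n + 1) ω = upperCrossingTime a b g N (n + 1) ω := by
      rw [upperCrossingTime_succ_eq, upperCrossingTime_succ_eq, ih.2, hup']
    exact ⟨hupper, by simp only [lowerCrossingTime, hupper, hlow']⟩

theorem upcrossingsBefore_apply_congr (hlow : ∀ j, f j ω ≤ a ↔ g j ω ≤ a)
    (hup : ∀ j, b ≤ f j ω ↔ b ≤ g j ω) :
    upcrossingsBefore a b f N ω = upcrossingsBefore a b g N ω := by
  simp only [upcrossingsBefore, (crossingTime_apply_congr hlow hup _).1]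

theorem upcrossingStrat_apply_congr (hlow : ∀ j, f j ω ≤ a ↔ g j ω ≤ a)
    (hup : ∀ j, b ≤ f j ω ↔ b ≤ g j ω) (n : ℕ) :
    upcrossingStrat a b f N n ω = upcrossingStrat a b g N n ω := by
  simp only [upcrossingStrat, (crossingTime_apply_congr hlow hup _).1,
    (crossingTime_apply_congr hlow hup _).2]

/-- Raising the final value `f N ω` to `a` changes no crossing time, which reduces this to
`mul_upcrossingsBefore_le`; the price is the last strategy increment, at most `(a - f N ω)⁺`. -/
theorem mul_upcrossingsBefore_le_add_posPart (hab : a < b) :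
    (b - a) * upcrossingsBefore a b f N ω ≤
      ∑ k ∈ Finset.range N, upcrossingStrat a b f N k ω * (f (k + 1) - f k) ω + (a - f N ω)⁺ := by
  set f' : ℕ → Ω → ℝ := fun n ω' => if n = N then max (f N ω') a else f n ω'
  have hlow : ∀ j, f j ω ≤ a ↔ f' j ω ≤ a := fun j => by
    by_cases hj : j = N <;> simp [f', hj]
  have hup : ∀ j, b ≤ f j ω ↔ b ≤ f' j ω := fun j => by
    by_cases hj : j = N <;> simp [f', hj, hab.not_ge]
  have hraised := mul_upcrossingsBefore_le (f := f') (N := N) (ω := ω) (by simp [f']) hab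
  rw [← upcrossingsBefore_apply_congr hlow hup] at hraised
  simp_rw [← upcrossingStrat_apply_congr hlow hup] at hraised
  refine hraised.trans ?_
  cases N with
  | zero => simp [posPart_nonneg]
  | succ n =>
    have hsum : ∀ k ∈ Finset.range n, upcrossingStrat a b f (n + 1) k ω * (f' (k + 1) - f' k) ω =
        upcrossingStrat a b f (n + 1) k ω * (f (k + 1) - f k) ω := fun k hk => by
      have hk := Finset.mem_range.1 hk
      simp [f', show k ≠ n by omega, show k ≠ n + 1 by omega]
    have hlast : (f' (n + 1) - f' n) ω = (f (n + 1) - f n) ω + (a - f (n + 1) ω)⁺ := by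
      have hmax : max (f (n + 1) ω) a = f (n + 1) ω + (a - f (n + 1) ω)⁺ := by
        rw [posPart_def, ← max_add_add_left, add_sub_cancel, add_zero, max_comm]
      simp only [f', Pi.sub_apply, if_neg n.succ_ne_self.symm, reduceIte, hmax]
      ring
    rw [Finset.sum_range_succ, Finset.sum_range_succ, Finset.sum_congr rfl hsum, hlast, mul_add,
      ← add_assoc]
    gcongr
    exact mul_le_of_le_one_left (posPart_nonneg _) upcrossingStrat_le_one

end Crossings

section CondVariation

variable {Ω : Type*} {m m₀ : MeasurableSpace Ω} {μ : Measure Ω}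

theorem integral_mul_le_integral_abs_condExp [IsFiniteMeasure μ] {H X : Ω → ℝ} (hm : m ≤ m₀)
    (hH : StronglyMeasurable[m] H) (hH₁ : ∀ ω, |H ω| ≤ 1) (hX : Integrable X μ) :
    ∫ ω, H ω * X ω ∂μ ≤ ∫ ω, |(μ[X | m]) ω| ∂μ := by
  have hH' : AEStronglyMeasurable H μ := (hH.mono hm).aestronglyMeasurable
  have hHX : Integrable (H * X) μ := hX.bdd_mul hH' (Eventually.of_forall hH₁)
  have hHcond : Integrable (H * μ[X | m]) μ :=
    integrable_condExp.bdd_mul hH' (Eventually.of_forall hH₁)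
  calc ∫ ω, H ω * X ω ∂μ = ∫ ω, (μ[H * X | m]) ω ∂μ := (integral_condExp hm).symm
    _ = ∫ ω, H ω * (μ[X | m]) ω ∂μ :=
      integral_congr_ae (condExp_mul_of_stronglyMeasurable_left hH hHX hX)
    _ ≤ ∫ ω, |(μ[X | m]) ω| ∂μ := integral_mono hHcond integrable_condExp.abs fun ω =>
      (le_abs_self _).trans ((abs_mul _ _).trans_le (mul_le_of_le_one_left (abs_nonneg _) (hH₁ ω)))

noncomputable def condVariation (μ : Measure Ω) (𝒢 : Filtration ℕ m₀) (f : ℕ → Ω → ℝ) (N : ℕ) :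
    ℝ :=
  ∑ j ∈ Finset.range N, ∫ ω, |(μ[f (j + 1) - f j | 𝒢 j]) ω| ∂μ

theorem mul_integral_upcrossingsBefore_le_condVariation_add [IsFiniteMeasure μ]
    {𝒢 : Filtration ℕ m₀} {f : ℕ → Ω → ℝ} (hf : Adapted 𝒢 f) (hint : ∀ n, Integrable (f n) μ)
    {a b : ℝ} (hab : a < b) (N : ℕ) :
    (b - a) * ∫ ω, (upcrossingsBefore a b f N ω : ℝ) ∂μ ≤
      condVariation μ 𝒢 f N + ∫ ω, (a - f N ω)⁺ ∂μ := by
  have hstrat : ∀ j, StronglyMeasurable[𝒢 j] (upcrossingStrat a b f N j) :=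
    hf.stronglyAdapted.upcrossingStrat
  have hstrat₁ : ∀ j ω, |upcrossingStrat a b f N j ω| ≤ 1 := fun j ω => by
    rw [abs_of_nonneg upcrossingStrat_nonneg]; exact upcrossingStrat_le_one
  have hterm : ∀ j, Integrable (fun ω => upcrossingStrat a b f N j ω * (f (j + 1) - f j) ω) μ :=
    fun j => ((hint _).sub (hint _)).bdd_mul ((hstrat j).mono (𝒢.le j)).aestronglyMeasurable
      (Eventually.of_forall (hstrat₁ j))
  have hsum : Integrable (fun ω => ∑ j ∈ Finset.range N,
      upcrossingStrat a b f N j ω * (f (j + 1) - f j) ω) μ :=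
    integrable_finsetSum _ fun j _ => hterm j
  have hpos : Integrable (fun ω => (a - f N ω)⁺) μ := ((integrable_const a).sub (hint N)).pos_part
  rw [← integral_const_mul]
  calc ∫ ω, (b - a) * (upcrossingsBefore a b f N ω : ℝ) ∂μ
      ≤ ∫ ω, (∑ j ∈ Finset.range N, upcrossingStrat a b f N j ω * (f (j + 1) - f j) ω
          + (a - f N ω)⁺) ∂μ :=
        integral_mono ((hf.stronglyAdapted.integrable_upcrossingsBefore hab).const_mul _)
          (hsum.add hpos) fun ω => mul_upcrossingsBefore_le_add_posPart hab
    _ ≤ condVariation μ 𝒢 f N + ∫ ω, (a - f N ω)⁺ ∂μ := by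
      rw [integral_add hsum hpos, integral_finsetSum _ fun j _ => hterm j]
      gcongr
      exact Finset.sum_le_sum fun j _ => integral_mul_le_integral_abs_condExp (𝒢.le j)
        (hstrat j) (hstrat₁ j) ((hint _).sub (hint _))

theorem lintegral_upcrossingsBefore_le_ofReal [IsFiniteMeasure μ] {𝒢 : Filtration ℕ m₀}
    {f : ℕ → Ω → ℝ} (hf : Adapted 𝒢 f) (hint : ∀ n, Integrable (f n) μ) {a b : ℝ} (hab : a < b)
    {N : ℕ} {c : ℝ} (hc : condVariation μ 𝒢 f N ≤ c) :
    ∫⁻ ω, (upcrossingsBefore a b f N ω : ℝ≥0∞) ∂μ ≤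
      ENNReal.ofReal (1 / (b - a) * (c + ∫ ω, (a - f N ω)⁺ ∂μ)) := by
  calc ∫⁻ ω, (upcrossingsBefore a b f N ω : ℝ≥0∞) ∂μ
      = ∫⁻ ω, ENNReal.ofReal (upcrossingsBefore a b f N ω) ∂μ :=
        lintegral_congr fun ω => (ENNReal.ofReal_natCast _).symm
    _ = ENNReal.ofReal (∫ ω, (upcrossingsBefore a b f N ω : ℝ) ∂μ) :=
        (ofReal_integral_eq_lintegral_ofReal (hf.stronglyAdapted.integrable_upcrossingsBefore hab)
          (Eventually.of_forall fun ω => Nat.cast_nonneg _)).symm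
    _ ≤ _ := by
      refine ENNReal.ofReal_le_ofReal ?_
      rw [one_div_mul_eq_div, le_div_iff₀' (sub_pos.2 hab)]
      linarith [mul_integral_upcrossingsBefore_le_condVariation_add (μ := μ) hf hint hab N]

end CondVariation

theorem IsCompact.bddAbove_image_of_isBoundedUnder {X α : Type*} [TopologicalSpace X]
    [SemilatticeSup α] [Nonempty α] {K : Set X} (hK : IsCompact K) {g : X → α}
    (hg : ∀ x ∈ K, IsBoundedUnder (· ≤ ·) (𝓝 x) g) : BddAbove (g '' K) := by
  refine hK.induction_on (p := fun s => BddAbove (g '' s)) (by simp)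
    (fun s t hst ht => ht.mono (Set.image_mono hst))
    (fun s t hs ht => by rw [Set.image_union]; exact hs.union ht) fun x hx => ?_
  obtain ⟨c, hc⟩ := hg x hx
  exact ⟨{y | g y ≤ c}, mem_nhdsWithin_of_mem_nhds hc, ⟨c, by rintro _ ⟨y, hy, rfl⟩; exact hy⟩⟩

theorem isBoundedUnder_abs_of_continuousWithinAt_Ici {g : ℝ → ℝ} {s l : ℝ}
    (hrc : ContinuousWithinAt g (Set.Ici s) s) (hll : Tendsto g (𝓝[<] s) (𝓝 l)) :
    IsBoundedUnder (· ≤ ·) (𝓝 s) fun u => |g u| := by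
  rw [← nhdsLT_sup_nhdsGE, IsBoundedUnder, Filter.map_sup]
  exact isBounded_sup hll.abs.isBoundedUnder_le hrc.tendsto.abs.isBoundedUnder_le

theorem abs_le_iSup_abs_of_cadlag {g : ℝ → ℝ} (hrc : ∀ s, ContinuousWithinAt g (Set.Ici s) s)
    (hll : ∀ s, ∃ l, Tendsto g (𝓝[<] s) (𝓝 l)) {K : Set ℝ} (hK : IsCompact K) {t : ℝ}
    (ht : t ∈ K) : |g t| ≤ ⨆ s ∈ K, |g s| := by
  have hbdd : BddAbove ((fun u => |g u|) '' K) := hK.bddAbove_image_of_isBoundedUnder fun x _ =>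
    isBoundedUnder_abs_of_continuousWithinAt_Ici (hrc x) (hll x).choose_spec
  exact le_ciSup₂ (f := fun s (_ : s ∈ K) => |g s|) (hbdd.mono (Set.iUnion_subset fun s =>
    Set.range_subset_iff.2 fun hs => Set.mem_image_of_mem (fun u => |g u|) hs)) t ht

theorem le_upcrossingsBefore_of_alternating {Ω : Type*} {a b : ℝ} (hab : a < b)
    {f : ℕ → Ω → ℝ} {ω : Ω} {M n : ℕ} (p q : Fin n → ℕ) (hpq : ∀ i, p i < q i)
    (hqp : ∀ i j, i < j → q i < p j) (hqM : ∀ i, q i < M) (hfp : ∀ i, f (p i) ω ≤ a)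
    (hfq : ∀ i, b ≤ f (q i) ω) :
    n ≤ upcrossingsBefore a b f M ω := by
  have hstep : ∀ c (hc : c < n), upperCrossingTime a b f M c ω ≤ p ⟨c, hc⟩ →
      upperCrossingTime a b f M (c + 1) ω ≤ q ⟨c, hc⟩ := fun c hc h => by
    have hlow : lowerCrossingTime a b f M c ω ≤ p ⟨c, hc⟩ :=
      hittingBtwn_le_of_mem h ((hpq _).trans (hqM _)).le (hfp _)
    rw [upperCrossingTime_succ_eq]
    exact hittingBtwn_le_of_mem (hlow.trans (hpq _).le) (hqM _).le (hfq _)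
  have hupper : ∀ c (hc : c < n), upperCrossingTime a b f M (c + 1) ω ≤ q ⟨c, hc⟩ := by
    intro c
    induction c with
    | zero => exact fun hc => hstep 0 hc (Nat.zero_le _)
    | succ c ih =>
      exact fun hc => hstep (c + 1) hc ((ih (by omega)).trans (hqp _ _ (by simp [Fin.lt_def])).le)
  cases n with
  | zero => exact Nat.zero_le _
  | succ n =>
    exact le_csSup (upperCrossingTime_lt_bddAbove hab)
      ((hupper n n.lt_succ_self).trans_lt (hqM _))

noncomputable def dyadicGrid (T : ℝ) (k j : ℕ) : ℝ := T * (min j (2 ^ k) : ℕ) / 2 ^ k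

section DyadicGrid

variable {T : ℝ} {k j : ℕ}

theorem monotone_dyadicGrid (hT : 0 ≤ T) (k : ℕ) : Monotone (dyadicGrid T k) := fun i j hij => by
  unfold dyadicGrid; gcongr

theorem dyadicGrid_mem_Icc (hT : 0 ≤ T) : dyadicGrid T k j ∈ Set.Icc 0 T := by
  unfold dyadicGrid
  refine ⟨by positivity, ?_⟩
  rw [div_le_iff₀ (by positivity)]
  gcongr
  exact_mod_cast min_le_right j (2 ^ k)

theorem dyadicGrid_of_le (h : 2 ^ k ≤ j) : dyadicGrid T k j = T := by
  simp [dyadicGrid, min_eq_right h]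

theorem dyadicGrid_of_ge (h : j ≤ 2 ^ k) : dyadicGrid T k j = T * j / 2 ^ k := by
  simp [dyadicGrid, min_eq_left h]

theorem ceil_le_two_pow_of_le {s : ℝ} (hT : 0 < T) (hs : s ≤ T) : ⌈s * 2 ^ k / T⌉₊ ≤ 2 ^ k := by
  refine Nat.ceil_le.2 ?_
  rw [div_le_iff₀ hT]
  push_cast
  rw [mul_comm]
  gcongr

theorem le_dyadicGrid_ceil {s : ℝ} (hT : 0 < T) (hs : s ≤ T) :
    s ≤ dyadicGrid T k ⌈s * 2 ^ k / T⌉₊ := by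
  rw [dyadicGrid_of_ge (ceil_le_two_pow_of_le hT hs), le_div_iff₀ (by positivity),
    ← div_le_iff₀' hT]
  exact Nat.le_ceil _

theorem dyadicGrid_ceil_lt {s : ℝ} (hT : 0 < T) (hs : s ∈ Set.Icc 0 T) :
    dyadicGrid T k ⌈s * 2 ^ k / T⌉₊ < s + T / 2 ^ k := by
  have hceil := Nat.ceil_lt_add_one (R := ℝ) (a := s * 2 ^ k / T) (by have := hs.1; positivity)
  rw [dyadicGrid_of_ge (ceil_le_two_pow_of_le hT hs.2)]
  calc T * ⌈s * 2 ^ k / T⌉₊ / 2 ^ k < T * (s * 2 ^ k / T + 1) / 2 ^ k := by gcongr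
    _ = s + T / 2 ^ k := by field_simp

theorem tendsto_dyadicGrid_ceil {s : ℝ} (hT : 0 < T) (hs : s ∈ Set.Icc 0 T) :
    Tendsto (fun k => dyadicGrid T k ⌈s * 2 ^ k / T⌉₊) atTop (𝓝[≥] s) := by
  have hmesh : Tendsto (fun k : ℕ => s + T / 2 ^ k) atTop (𝓝 s) := by
    simpa using (tendsto_const_nhds (x := s)).add <| (tendsto_const_nhds (x := T)).div_atTop
      (tendsto_pow_atTop_atTop_of_one_lt (one_lt_two (α := ℝ)))
  refine tendsto_nhdsWithin_iff.2 ⟨tendsto_of_tendsto_of_tendsto_of_le_of_le tendsto_const_nhds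
    hmesh (fun k => le_dyadicGrid_ceil hT hs.2) (fun k => (dyadicGrid_ceil_lt hT hs).le), ?_⟩
  exact Eventually.of_forall fun k => le_dyadicGrid_ceil hT hs.2

end DyadicGrid

/-- Right-continuity lets each witness time `s` of an upcrossing be moved to the dyadic point
just above it, `T * ⌈s 2 ^ k / T⌉ / 2 ^ k`, for all large `k`. -/
theorem eventually_le_upcrossingsBefore_dyadicGrid {Ω : Type*} {Y : ℝ → Ω → ℝ} {T a b : ℝ}
    (hT : 0 < T) (hab : a < b) {ω : Ω}
    (hrc : ∀ s, ContinuousWithinAt (fun u => Y u ω) (Set.Ici s) s) {n : ℕ}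
    (h : upcrossProp Y T a b n ω) :
    ∀ᶠ k in atTop, n ≤ upcrossingsBefore a b (fun j => Y (dyadicGrid T k j)) (2 ^ k + 1) ω := by
  obtain ⟨u, v, huv, hvu⟩ := h
  have hu : ∀ i, ∀ᶠ k in atTop, Y (dyadicGrid T k ⌈u i * 2 ^ k / T⌉₊) ω < a ∧
      dyadicGrid T k ⌈u i * 2 ^ k / T⌉₊ < v i := fun i =>
    (tendsto_dyadicGrid_ceil hT (huv i).1).eventually <| ((hrc _).eventually
      (eventually_lt_nhds (huv i).2.2.2.1)).and
      (eventually_nhdsWithin_of_eventually_nhds (eventually_lt_nhds (huv i).2.2.1))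
  have hv : ∀ i, ∀ᶠ k in atTop, b < Y (dyadicGrid T k ⌈v i * 2 ^ k / T⌉₊) ω ∧
      ∀ j, i < j → dyadicGrid T k ⌈v i * 2 ^ k / T⌉₊ < u j := fun i =>
    (tendsto_dyadicGrid_ceil hT (huv i).2.1).eventually <| ((hrc _).eventually
      (eventually_gt_nhds (huv i).2.2.2.2)).and <| eventually_all.2 fun j =>
      eventually_imp_distrib_left.2 fun hij =>
        eventually_nhdsWithin_of_eventually_nhds (eventually_lt_nhds (hvu i j hij))
  filter_upwards [eventually_all.2 hu, eventually_all.2 hv] with k hu hv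
  have hmono := monotone_dyadicGrid hT.le k
  exact le_upcrossingsBefore_of_alternating hab (fun i => ⌈u i * 2 ^ k / T⌉₊)
    (fun i => ⌈v i * 2 ^ k / T⌉₊)
    (fun i => hmono.reflect_lt ((hu i).2.trans_le (le_dyadicGrid_ceil hT (huv i).2.1.2)))
    (fun i j hij => hmono.reflect_lt (((hv i).2 j hij).trans_le
      (le_dyadicGrid_ceil hT (huv j).1.2)))
    (fun i => Nat.lt_succ_of_le (ceil_le_two_pow_of_le hT (huv i).2.1.2))
    (fun i => (hu i).1.le) (fun i => (hv i).1.le)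

def MeasureTheory.Filtration.comp {Ω ι κ : Type*} [Preorder ι] [Preorder κ] {m : MeasurableSpace Ω}
    (ℱ : Filtration ι m) {τ : κ → ι} (hτ : Monotone τ) : Filtration κ m :=
  ⟨fun j => ℱ (τ j), fun _ _ hij => ℱ.mono (hτ hij), fun _ => ℱ.le _⟩

theorem condVariation_dyadicGrid_eq {Ω : Type*} {m : MeasurableSpace Ω} (μ : Measure Ω)
    (ℱ : Filtration ℝ m) (Y : ℝ → Ω → ℝ) {T : ℝ} (hT : 0 ≤ T) (k : ℕ) :
    condVariation μ (ℱ.comp (monotone_dyadicGrid hT k)) (fun j => Y (dyadicGrid T k j))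
        (2 ^ k + 1) =
      ∑ i : Fin (2 ^ k), ∫ ω, |(μ[fun ω' => Y (dyadicGrid T k (i.succ : ℕ)) ω' -
        Y (dyadicGrid T k (i.castSucc : ℕ)) ω' | ℱ (dyadicGrid T k (i.castSucc : ℕ))]) ω| ∂μ := by
  have hlast : dyadicGrid T k (2 ^ k + 1) = dyadicGrid T k (2 ^ k) := by
    rw [dyadicGrid_of_le le_rfl, dyadicGrid_of_le (Nat.le_succ _)]
  rw [condVariation, Finset.sum_range_succ, hlast, sub_self, condExp_zero]
  simp only [Pi.zero_apply, abs_zero, integral_zero, add_zero]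
  exact (Fin.sum_univ_eq_sum_range (fun j => ∫ ω, |(μ[(fun ω' => Y (dyadicGrid T k (j + 1)) ω' -
    Y (dyadicGrid T k j) ω') | ℱ (dyadicGrid T k j)]) ω| ∂μ) _).symm

theorem integral_posPart_sub_le {Ω : Type*} {m : MeasurableSpace Ω} {μ : Measure Ω}
    [IsProbabilityMeasure μ] {X S : Ω → ℝ} (hX : Integrable X μ) (hS : Integrable S μ)
    (hXS : ∀ ω, |X ω| ≤ S ω) (a : ℝ) :
    ∫ ω, (a - X ω)⁺ ∂μ ≤ |a| + ∫ ω, S ω ∂μ := by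
  calc ∫ ω, (a - X ω)⁺ ∂μ ≤ ∫ ω, (|a| + S ω) ∂μ :=
        integral_mono ((integrable_const a).sub hX).pos_part ((integrable_const _).add hS)
          fun ω => max_le (by linarith [le_abs_self a, neg_abs_le (X ω), hXS ω])
            (by linarith [abs_nonneg a, (abs_nonneg (X ω)).trans (hXS ω)])
    _ = |a| + ∫ ω, S ω ∂μ := by
      rw [integral_add (integrable_const _) hS, integral_const, probReal_univ, one_smul]

/-- Meyer–Zheng upcrossing estimate: for a càdlàg integrable adapted process `Y` with
conditional variation `CV(Y) ≤ cv`, and `a < b`,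
`E[N^{a,b}(Y)] ≤ (1/(b−a)) (|a| + CV(Y) + E[sup_{t≤T}|Y_t|])`. -/
theorem stmt_8 (T : ℝ) (hT : 0 < T) (a b : ℝ) (hab : a < b)
    {Ω : Type*} {m : MeasurableSpace Ω} (μ : Measure Ω) [IsProbabilityMeasure μ]
    (ℱ : Filtration ℝ m)
    (Y : ℝ → Ω → ℝ)
    (hY_adapted : Adapted ℱ Y)
    (hY_int : ∀ s, Integrable (Y s) μ)
    -- càdlàg paths
    (hY_rc : ∀ ω s, ContinuousWithinAt (fun u => Y u ω) (Set.Ici s) s)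
    (hY_ll : ∀ ω s, ∃ l, Filter.Tendsto (fun u => Y u ω)
      (nhdsWithin s (Set.Iio s)) (nhds l))
    -- the running supremum is integrable
    (hS_int : Integrable (fun ω => ⨆ s ∈ Set.Icc (0:ℝ) T, |Y s ω|) μ)
    -- `cv` bounds the conditional variation of `Y`
    (cv : ℝ)
    (hcv : ∀ (n : ℕ) (τ : Fin (n + 1) → ℝ), Monotone τ → (∀ i, τ i ∈ Set.Icc (0:ℝ) T) →
      τ (Fin.last n) = T →
      (∑ i : Fin n, ∫ ω,
          |(μ[fun ω' => Y (τ i.succ) ω' - Y (τ i.castSucc) ω' | ℱ (τ i.castSucc)]) ω| ∂μ) ≤ cv) :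
    (∫⁻ ω, ⨆ n ∈ {n : ℕ | upcrossProp Y T a b n ω}, (n : ENNReal) ∂μ) ≤
      ENNReal.ofReal ((1 / (b - a)) *
        (|a| + cv + ∫ ω, (⨆ s ∈ Set.Icc (0:ℝ) T, |Y s ω|) ∂μ)) := by
  set S : Ω → ℝ := fun ω => ⨆ s ∈ Set.Icc (0:ℝ) T, |Y s ω|
  -- càdlàg paths are bounded on `[0, T]`, so `S ω` is not the junk value of an unbounded `⨆`
  have hYT : ∀ ω, |Y T ω| ≤ S ω := fun ω =>
    abs_le_iSup_abs_of_cadlag (hY_rc ω) (hY_ll ω) isCompact_Icc ⟨hT.le, le_rfl⟩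
  have hterminal := integral_posPart_sub_le (hY_int T) hS_int hYT a
  have hadapted : ∀ k, Adapted (ℱ.comp (monotone_dyadicGrid hT.le k))
      fun j => Y (dyadicGrid T k j) := fun k j => hY_adapted _
  set U : ℕ → Ω → ℕ := fun k => upcrossingsBefore a b (fun j => Y (dyadicGrid T k j)) (2 ^ k + 1)
  have hU : ∀ k, ∫⁻ ω, (U k ω : ℝ≥0∞) ∂μ ≤
      ENNReal.ofReal ((1 / (b - a)) * (|a| + cv + ∫ ω, S ω ∂μ)) := fun k => by
    have hcvk : condVariation μ (ℱ.comp (monotone_dyadicGrid hT.le k))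
        (fun j => Y (dyadicGrid T k j)) (2 ^ k + 1) ≤ cv := by
      rw [condVariation_dyadicGrid_eq μ ℱ Y hT.le k]
      exact hcv (2 ^ k) (fun i => dyadicGrid T k i)
        ((monotone_dyadicGrid hT.le k).comp Fin.val_strictMono.monotone)
        (fun i => dyadicGrid_mem_Icc hT.le) (dyadicGrid_of_le le_rfl)
    refine (lintegral_upcrossingsBefore_le_ofReal (hadapted k) (fun j => hY_int _) hab
      hcvk).trans (ENNReal.ofReal_le_ofReal ?_)
    rw [dyadicGrid_of_le (Nat.le_succ _)]
    exact mul_le_mul_of_nonneg_left (by linarith) (one_div_pos.2 (sub_pos.2 hab)).le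
  calc _ ≤ ∫⁻ ω, liminf (fun k => (U k ω : ℝ≥0∞)) atTop ∂μ :=
        lintegral_mono fun ω => iSup₂_le fun n hn => le_liminf_of_le (by isBoundedDefault)
          ((eventually_le_upcrossingsBefore_dyadicGrid hT hab (hY_rc ω) hn).mono
            fun k hk => Nat.cast_le.2 hk)
    _ ≤ liminf (fun k => ∫⁻ ω, (U k ω : ℝ≥0∞) ∂μ) atTop :=
        lintegral_liminf_le fun k =>
          measurable_from_nat.comp ((hadapted k).stronglyAdapted.measurable_upcrossingsBefore hab)
    _ ≤ _ := liminf_le_of_frequently_le' (Frequently.of_forall hU)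
end

section
/- Let g, g^n : ℝ^{d+1} → ℝ be measurable with linear growth |g(x)|, |g^n(x)| ≤ C(1+|x|) uniformly in n, and g^n → g in L^{(d+1)p}_{loc}(ℝ^{d+1}) for some p ≥ 1. Let X be a continuous ℝ^{d+1}-valued process satisfying the Krylov estimate: for every N there is K(t,N,d) such that E∫₀ᵗ h(X_r)1_{sup_{s≤r}|X_s|≤N} dr ≤ K(t,N,d)‖h‖_{L^{d+1}(B_N)} for all nonnegative measurable h supported in B_N, and E sup_{s≤t}|X_s|^{2p} < ∞. Then E∫₀ᵗ|g^n(X_r) − g(X_r)|^p dr → 0 as n → ∞. -/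
/-!
Split the time integral according to whether the path has left the ball `B_N` by time `r`.
Where it has not, the integrand is supported in `B_N`, so the Krylov estimate bounds its
expectation by `K_N ‖gⁿ - g‖_{L^{(d+1)p}(B_N)}^p`, which tends to zero as `n → ∞`. Where it has,
`sup_{s ≤ t} |X_s| > N`, and linear growth together with Chebyshev's inequality bound the
contribution by `(2C)^p t E(1 + sup_{s ≤ t} |X_s|)^{2p} / (1 + N)^p`, uniformly in `n`.
-/

open MeasureTheory Filter Metric Set

open scoped ENNReal Topology

theorem tendsto_zero_of_forall_le_add {α β : Type*} {l : Filter α} {l' : Filter β} [l'.NeBot]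
    {F : α → ℝ≥0∞} {T : β → ℝ≥0∞} (hT : Tendsto T l' (𝓝 0))
    (hF : ∀ᶠ N in l', ∃ a : α → ℝ≥0∞, Tendsto a l (𝓝 0) ∧ ∀ n, F n ≤ a n + T N) :
    Tendsto F l (𝓝 0) := by
  refine ENNReal.tendsto_nhds_zero.2 fun ε hε => ?_
  have hε2 : 0 < ε / 2 := ENNReal.half_pos hε.ne'
  obtain ⟨N, hTN, a, ha, hFa⟩ :=
    ((ENNReal.tendsto_nhds_zero.1 hT _ hε2).and hF).exists
  filter_upwards [ENNReal.tendsto_nhds_zero.1 ha _ hε2] with n han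
  calc F n ≤ a n + T N := hFa n
    _ ≤ ε / 2 + ε / 2 := add_le_add han hTN
    _ = ε := ENNReal.add_halves ε

theorem ENNReal.tendsto_div_one_add_ofReal_rpow_atTop {B : ℝ≥0∞} {p : ℝ} (hB : B ≠ ∞)
    (hp : 0 < p) : Tendsto (fun N : ℝ => B / (1 + ENNReal.ofReal N) ^ p) atTop (𝓝 0) := by
  have h : Tendsto (fun N : ℝ => (1 + ENNReal.ofReal N) ^ p) atTop (𝓝 ∞) := by
    have := ((ENNReal.continuous_rpow_const (y := p)).tendsto ∞).comp
      (ENNReal.tendsto_ofReal_atTop.const_add 1)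
    simpa [Function.comp_def, ENNReal.top_rpow_of_pos hp] using this
  simpa using ENNReal.Tendsto.const_div h (Or.inr hB)

theorem lintegral_one_add_rpow_ne_top {Ω : Type*} [MeasurableSpace Ω] {μ : Measure Ω}
    [IsFiniteMeasure μ] {f : Ω → ℝ≥0∞} {q : ℝ} (hq : 1 ≤ q) (hf : ∫⁻ ω, f ω ^ q ∂μ < ∞) :
    ∫⁻ ω, (1 + f ω) ^ q ∂μ ≠ ∞ := by
  have h2 : (2 : ℝ≥0∞) ^ (q - 1) ≠ ∞ := ENNReal.rpow_ne_top_of_nonneg (by linarith) (by simp)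
  refine ne_top_of_le_ne_top ?_ (lintegral_mono fun ω =>
    ENNReal.rpow_add_le_mul_rpow_add_rpow 1 (f ω) hq)
  rw [lintegral_const_mul' _ _ h2, lintegral_add_left measurable_const, lintegral_const]
  simp [ENNReal.mul_eq_top, h2, hf.ne]

theorem ENNReal.rpow_le_rpow_two_mul_div_rpow {a b : ℝ≥0∞} {p : ℝ} (hab : a ≤ b) (ha : a ≠ 0)
    (ha' : a ≠ ∞) (hp : 0 ≤ p) : b ^ p ≤ b ^ (2 * p) / a ^ p := by
  rw [ENNReal.le_div_iff_mul_le (Or.inl (ENNReal.rpow_pos (pos_iff_ne_zero.2 ha) ha').ne')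
    (Or.inl (ENNReal.rpow_ne_top_of_nonneg hp ha')), two_mul,
    ENNReal.rpow_add_of_nonneg _ _ hp hp]
  gcongr

theorem ofReal_abs_rpow_le {y c ρ p : ℝ} {m : ℝ≥0∞} (hp : 0 ≤ p) (hy : |y| ≤ c * (1 + ρ))
    (hρ : 0 ≤ ρ) (hρm : ENNReal.ofReal ρ ≤ m) :
    ENNReal.ofReal (|y| ^ p) ≤ (ENNReal.ofReal c * (1 + m)) ^ p := by
  have hc : 0 ≤ c := nonneg_of_mul_nonneg_left ((abs_nonneg y).trans hy) (by linarith)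
  calc ENNReal.ofReal (|y| ^ p) ≤ ENNReal.ofReal ((c * (1 + ρ)) ^ p) :=
        ENNReal.ofReal_le_ofReal (Real.rpow_le_rpow (abs_nonneg y) hy hp)
    _ = (ENNReal.ofReal c * (1 + ENNReal.ofReal ρ)) ^ p := by
        rw [← ENNReal.ofReal_rpow_of_nonneg (by positivity) hp, ENNReal.ofReal_mul hc,
          ENNReal.ofReal_add zero_le_one hρ, ENNReal.ofReal_one]
    _ ≤ (ENNReal.ofReal c * (1 + m)) ^ p := by gcongr

theorem setLIntegral_ofReal_indicator_abs_rpow {α : Type*} [MeasurableSpace α] {ν : Measure α}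
    {s : Set α} (hs : MeasurableSet s) (u : α → ℝ) (p q : ℝ) :
    ∫⁻ x in s, ENNReal.ofReal (s.indicator (fun x => |u x| ^ p) x ^ q) ∂ν =
      ∫⁻ x in s, ENNReal.ofReal (|u x| ^ (q * p)) ∂ν :=
  setLIntegral_congr_fun hs fun x hx => by
    rw [indicator_of_mem hx, mul_comm, Real.rpow_mul (abs_nonneg _)]

theorem measurable_biSup_of_continuousOn {Ω γ α : Type*} [MeasurableSpace Ω]
    [TopologicalSpace γ] [SecondCountableTopology γ]
    [CompleteLinearOrder α] [TopologicalSpace α] [OrderTopology α]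
    [SecondCountableTopology α] [MeasurableSpace α] [BorelSpace α]
    {f : γ → Ω → α} {s : Set γ} (hcont : ∀ ω, ContinuousOn (f · ω) s)
    (hmeas : ∀ x, Measurable (f x)) :
    Measurable fun ω => ⨆ x ∈ s, f x ω := by
  obtain ⟨D, hD_count, hD_dense⟩ := TopologicalSpace.exists_countable_dense s
  have : Countable D := hD_count.to_subtype
  have hsup : ∀ ω, ⨆ x ∈ s, f x ω = ⨆ x : D, f x ω := fun ω => by
    rw [iSup_subtype']
    exact (hD_dense.ciSup' (hcont ω).domRestrict).symm
  simp_rw [hsup]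
  exact Measurable.iSup fun x => hmeas x

section RunningSup

variable {Ω E : Type*} [NormedAddCommGroup E] {X : ℝ → Ω → E}

noncomputable def runningSupNorm (X : ℝ → Ω → E) (t : ℝ) (ω : Ω) : ℝ≥0∞ :=
  ⨆ s ∈ Icc (0 : ℝ) t, ENNReal.ofReal ‖X s ω‖

def normBoundedUpTo (X : ℝ → Ω → E) (N : ℝ) : Set (ℝ × Ω) :=
  {q | ∀ s ∈ Icc (0 : ℝ) q.1, ‖X s q.2‖ ≤ N}

theorem measurable_runningSupNorm [MeasurableSpace Ω] [MeasurableSpace E]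
    [OpensMeasurableSpace E] (hcont : ∀ ω, Continuous fun s => X s ω)
    (hmeas : ∀ s, Measurable (X s)) (t : ℝ) : Measurable (runningSupNorm X t) :=
  measurable_biSup_of_continuousOn
    (fun ω => (ENNReal.continuous_ofReal.comp (hcont ω).norm).continuousOn)
    (fun s => (hmeas s).norm.ennreal_ofReal)

theorem ofReal_norm_le_runningSupNorm {s t : ℝ} (hs : s ∈ Icc 0 t) (ω : Ω) :
    ENNReal.ofReal ‖X s ω‖ ≤ runningSupNorm X t ω :=
  le_biSup (fun s => ENNReal.ofReal ‖X s ω‖) hs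

theorem ofReal_abs_rpow_le_indicator_add {u : E → ℝ} {c p r t N : ℝ} (hp : 0 ≤ p)
    (hu : ∀ x, |u x| ≤ c * (1 + ‖x‖)) (hr : r ∈ Ioc 0 t) (ω : Ω) :
    ENNReal.ofReal (|u (X r ω)| ^ p) ≤
      (normBoundedUpTo X N).indicator (fun q => ENNReal.ofReal
          ((closedBall 0 N).indicator (fun x => |u x| ^ p) (X q.1 q.2))) (r, ω) +
        ENNReal.ofReal c ^ p * (1 + runningSupNorm X t ω) ^ (2 * p) /
          (1 + ENNReal.ofReal N) ^ p := by
  by_cases hS : (r, ω) ∈ normBoundedUpTo X N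
  · have hx : X r ω ∈ closedBall 0 N := mem_closedBall_zero_iff.2 (hS r ⟨hr.1.le, le_rfl⟩)
    rw [indicator_of_mem hS]
    simp only [indicator_of_mem hx]
    exact le_self_add
  obtain ⟨s, hs, hsN⟩ : ∃ s ∈ Icc 0 r, N < ‖X s ω‖ := by
    simpa [normBoundedUpTo, and_assoc] using hS
  have hNM : ENNReal.ofReal N ≤ runningSupNorm X t ω :=
    (ENNReal.ofReal_le_ofReal hsN.le).trans
      (ofReal_norm_le_runningSupNorm ⟨hs.1, hs.2.trans hr.2⟩ ω)
  rw [indicator_of_notMem hS, zero_add, mul_div_assoc]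
  calc ENNReal.ofReal (|u (X r ω)| ^ p)
      ≤ (ENNReal.ofReal c * (1 + runningSupNorm X t ω)) ^ p :=
        ofReal_abs_rpow_le hp (hu _) (norm_nonneg _)
          (ofReal_norm_le_runningSupNorm ⟨hr.1.le, hr.2⟩ ω)
    _ = ENNReal.ofReal c ^ p * (1 + runningSupNorm X t ω) ^ p :=
        ENNReal.mul_rpow_of_nonneg _ _ hp
    _ ≤ _ := by
        gcongr
        exact ENNReal.rpow_le_rpow_two_mul_div_rpow (by gcongr) (by simp) (by simp) hp

theorem lintegral_rpow_le_indicator_add [MeasurableSpace Ω] (μ : Measure Ω)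
    {u : E → ℝ} {c p t N : ℝ} (hM : Measurable (runningSupNorm X t)) (hp : 0 ≤ p)
    (hu : ∀ x, |u x| ≤ c * (1 + ‖x‖)) :
    ∫⁻ ω, ∫⁻ r in Ioc 0 t, ENNReal.ofReal (|u (X r ω)| ^ p) ∂volume ∂μ ≤
      ∫⁻ ω, ∫⁻ r in Ioc 0 t, (normBoundedUpTo X N).indicator (fun q => ENNReal.ofReal
          ((closedBall 0 N).indicator (fun x => |u x| ^ p) (X q.1 q.2))) (r, ω) ∂volume ∂μ +
        ENNReal.ofReal t * ENNReal.ofReal c ^ p *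
          (∫⁻ ω, (1 + runningSupNorm X t ω) ^ (2 * p) ∂μ) / (1 + ENNReal.ofReal N) ^ p := by
  set I := (normBoundedUpTo X N).indicator fun q => ENNReal.ofReal
    ((closedBall 0 N).indicator (fun x => |u x| ^ p) (X q.1 q.2))
  set G := fun ω => (1 + runningSupNorm X t ω) ^ (2 * p)
  set D := (1 + ENNReal.ofReal N) ^ p
  have hG : Measurable G := (measurable_const.add hM).pow_const _
  calc _ ≤ ∫⁻ ω, ((∫⁻ r in Ioc 0 t, I (r, ω)) +
        ENNReal.ofReal c ^ p * G ω / D * ENNReal.ofReal t) ∂μ := by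
        refine lintegral_mono fun ω => ?_
        calc _ ≤ ∫⁻ r in Ioc 0 t, (I (r, ω) + ENNReal.ofReal c ^ p * G ω / D) :=
            setLIntegral_mono' measurableSet_Ioc
              fun r hr => ofReal_abs_rpow_le_indicator_add hp hu hr ω
          _ = _ := by
            rw [lintegral_add_right _ measurable_const, setLIntegral_const, Real.volume_Ioc,
              sub_zero]
    _ = _ := by
        rw [lintegral_add_right _ (by fun_prop)]
        congr 1
        simp only [div_eq_mul_inv]
        rw [← lintegral_const_mul _ hG, ← lintegral_mul_const _ (by fun_prop)]
        exact lintegral_congr fun ω => by ring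

end RunningSup

theorem stmt_12_general (d : ℕ) (p t : ℝ) (hp : 1 ≤ p)
    {Ω : Type*} [MeasurableSpace Ω] (μ : Measure Ω) [IsProbabilityMeasure μ]
    (X : ℝ → Ω → EuclideanSpace ℝ (Fin (d + 1)))
    (hX_cont : ∀ ω, Continuous fun s => X s ω)
    (hX_meas : ∀ s, Measurable (X s))
    (g : EuclideanSpace ℝ (Fin (d + 1)) → ℝ)
    (gn : ℕ → EuclideanSpace ℝ (Fin (d + 1)) → ℝ)
    (C : ℝ)
    (hg_meas : Measurable g) (hgn_meas : ∀ n, Measurable (gn n))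
    (hg_growth : ∀ x, |g x| ≤ C * (1 + ‖x‖))
    (hgn_growth : ∀ n x, |gn n x| ≤ C * (1 + ‖x‖))
    -- convergence gⁿ → g in L^{(d+1)p}_loc
    (hconv : ∀ N > (0:ℝ), Tendsto
      (fun n => ∫⁻ x in closedBall (0 : EuclideanSpace ℝ (Fin (d + 1))) N,
        ENNReal.ofReal (|gn n x - g x| ^ ((d + 1 : ℝ) * p))) atTop (nhds 0))
    -- Krylov estimate for X
    (hkrylov : ∀ N > (0:ℝ), ∃ K ≥ (0:ℝ),
      ∀ h : EuclideanSpace ℝ (Fin (d + 1)) → ℝ, Measurable h → (∀ x, 0 ≤ h x) →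
        (∀ x, N < ‖x‖ → h x = 0) →
        (∫⁻ ω, ∫⁻ r in Set.Ioc (0:ℝ) t,
            Set.indicator {q : ℝ × Ω | ∀ s ∈ Set.Icc (0:ℝ) q.1, ‖X s q.2‖ ≤ N}
              (fun q => ENNReal.ofReal (h (X q.1 q.2))) (r, ω) ∂volume ∂μ) ≤
          ENNReal.ofReal K *
            (∫⁻ x in closedBall (0 : EuclideanSpace ℝ (Fin (d + 1))) N,
              ENNReal.ofReal (h x ^ (d + 1 : ℝ))) ^ (1 / (d + 1 : ℝ)))
    -- moment bound on sup of X
    (hmom : (∫⁻ ω, (⨆ s ∈ Set.Icc (0:ℝ) t, ENNReal.ofReal ‖X s ω‖) ^ (2 * p) ∂μ) < ⊤) :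
    Tendsto (fun n => ∫⁻ ω, ∫⁻ r in Set.Ioc (0:ℝ) t,
        ENNReal.ofReal (|gn n (X r ω) - g (X r ω)| ^ p) ∂volume ∂μ)
      atTop (nhds 0) := by
  have hp0 : 0 < p := by linarith
  have hJ : ∫⁻ ω, (1 + runningSupNorm X t ω) ^ (2 * p) ∂μ ≠ ∞ :=
    lintegral_one_add_rpow_ne_top (by linarith) hmom
  refine tendsto_zero_of_forall_le_add (ENNReal.tendsto_div_one_add_ofReal_rpow_atTop
    (B := ENNReal.ofReal t * ENNReal.ofReal (2 * C) ^ p *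
      ∫⁻ ω, (1 + runningSupNorm X t ω) ^ (2 * p) ∂μ) (by finiteness) hp0) ?_
  filter_upwards [eventually_gt_atTop 0] with N hN
  obtain ⟨K, -, hK⟩ := hkrylov N hN
  refine ⟨fun n => ENNReal.ofReal K * (∫⁻ x in closedBall 0 N,
    ENNReal.ofReal (|gn n x - g x| ^ ((d + 1 : ℝ) * p))) ^ (1 / (d + 1 : ℝ)), ?_, fun n => ?_⟩
  · have hd : (0 : ℝ) < 1 / (d + 1 : ℝ) := by positivity
    have := ENNReal.Tendsto.const_mul
      (((ENNReal.continuous_rpow_const (y := 1 / (d + 1 : ℝ))).tendsto 0).comp (hconv N hN))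
      (Or.inr (ENNReal.ofReal_ne_top (r := K)))
    rwa [ENNReal.zero_rpow_of_pos hd, mul_zero] at this
  have hgrowth : ∀ x, |gn n x - g x| ≤ 2 * C * (1 + ‖x‖) := fun x => by
    linarith [abs_sub (gn n x) (g x), hgn_growth n x, hg_growth x]
  refine (lintegral_rpow_le_indicator_add μ (measurable_runningSupNorm hX_cont hX_meas t)
    hp0.le hgrowth).trans (add_le_add_left ?_ _)
  dsimp only
  rw [← setLIntegral_ofReal_indicator_abs_rpow measurableSet_closedBall]
  refine hK _ ?_ (fun x => indicator_nonneg (fun _ _ => by positivity) x)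
    (fun x hx => indicator_of_notMem (by simpa using hx) _)
  exact (((hgn_meas n).sub hg_meas).abs.pow_const p).indicator measurableSet_closedBall

/-- Proposition 4.2: if `gⁿ → g` in `L^{(d+1)p}_loc`, `g, gⁿ` have uniform linear growth, and
the process `X` has finite moments and satisfies a Krylov-type estimate, then
`E ∫₀ᵗ |gⁿ(X_r) − g(X_r)|^p dr → 0`. -/
theorem stmt_12 (d : ℕ) (p t : ℝ) (hp : 1 ≤ p) (ht : 0 < t)
    {Ω : Type*} [MeasurableSpace Ω] (μ : Measure Ω) [IsProbabilityMeasure μ]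
    (X : ℝ → Ω → EuclideanSpace ℝ (Fin (d + 1)))
    (hX_cont : ∀ ω, Continuous fun s => X s ω)
    (hX_meas : ∀ s, Measurable (X s))
    (g : EuclideanSpace ℝ (Fin (d + 1)) → ℝ)
    (gn : ℕ → EuclideanSpace ℝ (Fin (d + 1)) → ℝ)
    (C : ℝ)
    (hg_meas : Measurable g) (hgn_meas : ∀ n, Measurable (gn n))
    (hg_growth : ∀ x, |g x| ≤ C * (1 + ‖x‖))
    (hgn_growth : ∀ n x, |gn n x| ≤ C * (1 + ‖x‖))
    -- convergence gⁿ → g in L^{(d+1)p}_loc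
    (hconv : ∀ N > (0:ℝ), Tendsto
      (fun n => ∫⁻ x in closedBall (0 : EuclideanSpace ℝ (Fin (d + 1))) N,
        ENNReal.ofReal (|gn n x - g x| ^ ((d + 1 : ℝ) * p))) atTop (nhds 0))
    -- Krylov estimate for X
    (hkrylov : ∀ N > (0:ℝ), ∃ K ≥ (0:ℝ),
      ∀ h : EuclideanSpace ℝ (Fin (d + 1)) → ℝ, Measurable h → (∀ x, 0 ≤ h x) →
        (∀ x, N < ‖x‖ → h x = 0) →
        (∫⁻ ω, ∫⁻ r in Set.Ioc (0:ℝ) t,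
            Set.indicator {q : ℝ × Ω | ∀ s ∈ Set.Icc (0:ℝ) q.1, ‖X s q.2‖ ≤ N}
              (fun q => ENNReal.ofReal (h (X q.1 q.2))) (r, ω) ∂volume ∂μ) ≤
          ENNReal.ofReal K *
            (∫⁻ x in closedBall (0 : EuclideanSpace ℝ (Fin (d + 1))) N,
              ENNReal.ofReal (h x ^ (d + 1 : ℝ))) ^ (1 / (d + 1 : ℝ)))
    -- moment bound on sup of X
    (hmom : (∫⁻ ω, (⨆ s ∈ Set.Icc (0:ℝ) t, ENNReal.ofReal ‖X s ω‖) ^ (2 * p) ∂μ) < ⊤) :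
    Tendsto (fun n => ∫⁻ ω, ∫⁻ r in Set.Ioc (0:ℝ) t,
        ENNReal.ofReal (|gn n (X r ω) - g (X r ω)| ^ p) ∂volume ∂μ)
      atTop (nhds 0) :=
  stmt_12_general d p t hp μ X hX_cont hX_meas g gn C hg_meas hgn_meas hg_growth hgn_growth hconv
    hkrylov hmom
end
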